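/- For all integers p, q ≥ 0 and every f ∈ H_{p,q}, one has Z₁̄(Z₁̄(Z₁(Z₁ f))) = p (p − 1) (q + 1) (q + 2) · f. -/

import Mathlib

/- Work in the polynomial ring `A4 = ℂ[z, w, z̄, w̄]`, realized as
`MvPolynomial (Fin 4) ℂ` with variables `0 ↔ z`, `1 ↔ w`, `2 ↔ z̄`, `3 ↔ w̄`. -/

open MvPolynomial MeasureTheory

noncomputable section

abbrev A4 := MvPolynomial (Fin 4) ℂ

/-- `Z₁ f := w̄·∂_z f − z̄·∂_w f` -/
def Z1 (f : A4) : A4 := X 3 * pderiv 0 f - X 2 * pderiv 1 f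

/-- `Z₁̄ f := w·∂_{z̄} f − z·∂_{w̄} f` -/
def Z1c (f : A4) : A4 := X 1 * pderiv 2 f - X 0 * pderiv 3 f

/-- The Laplacian `Δ f := ∂_z ∂_{z̄} f + ∂_w ∂_{w̄} f` -/
def Lap (f : A4) : A4 := pderiv 0 (pderiv 2 f) + pderiv 1 (pderiv 3 f)

/-- weight giving degree in the variables (z, w) -/
def wHol : Fin 4 → ℕ := ![1, 1, 0, 0]

/-- weight giving degree in the variables (z̄, w̄) -/
def wAnti : Fin 4 → ℕ := ![0, 0, 1, 1]

/-- `f` is bihomogeneous of bidegree `(p, q)`: homogeneous of degree `p` in `(z, w)`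
and of degree `q` in `(z̄, w̄)`. -/
def IsBihom (p q : ℕ) (f : A4) : Prop :=
  IsWeightedHomogeneous wHol f p ∧ IsWeightedHomogeneous wAnti f q

/-! ### Auxiliary lemmas -/

lemma pderiv_comm' (i j : Fin 4) (f : A4) :
    pderiv i (pderiv j f) = pderiv j (pderiv i f) := by
  induction f using MvPolynomial.induction_on' with
  | add p q hp hq => simp [hp, hq]
  | monomial m a =>
    rcases eq_or_ne i j with rfl | hij; · rfl
    simp only [pderiv_monomial]
    have h1 : (m - Finsupp.single j 1 : Fin 4 →₀ ℕ) i = m i := by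
      simp [Finsupp.tsub_apply, Finsupp.single_apply, hij.symm]
    have h2 : (m - Finsupp.single i 1 : Fin 4 →₀ ℕ) j = m j := by
      simp [Finsupp.tsub_apply, Finsupp.single_apply, hij]
    have h3 : m - Finsupp.single j 1 - Finsupp.single i 1
        = m - Finsupp.single i 1 - Finsupp.single j 1 := by
      ext k; simp [Finsupp.tsub_apply]; omega
    rw [h1, h2, h3]; ring_nf

lemma X_mul_pderiv_monomial (i : Fin 4) (m : Fin 4 →₀ ℕ) (a : ℂ) :
    X i * pderiv i (monomial m a) = (m i : ℂ) • monomial m a := by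
  rw [pderiv_monomial, X, monomial_mul]
  rcases Nat.eq_zero_or_pos (m i) with h | h
  · simp [h]
  · have : Finsupp.single i 1 + (m - Finsupp.single i 1) = m := by
      ext k
      rcases eq_or_ne k i with rfl | hk
      · simp [Finsupp.tsub_apply]; omega
      · simp [Finsupp.tsub_apply, Finsupp.single_eq_of_ne' (Ne.symm hk)]
    rw [this, smul_monomial, smul_eq_mul]; congr 1; ring

lemma euler_weighted (w : Fin 4 → ℕ) (n : ℕ) (f : A4) (hf : IsWeightedHomogeneous w f n) :
    ∑ i : Fin 4, (w i : ℂ) • (X i * pderiv i f) = (n : ℂ) • f := by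
  conv_lhs => rw [f.as_sum]
  conv_rhs => rw [f.as_sum]
  simp only [map_sum, Finset.mul_sum, Finset.smul_sum]
  rw [Finset.sum_comm]
  refine Finset.sum_congr rfl fun m hm => ?_
  rw [mem_support_iff] at hm
  have hw : Finsupp.weight w m = n := hf hm
  calc ∑ i : Fin 4, (w i : ℂ) • (X i * pderiv i (monomial m (coeff m f)))
      = ∑ i : Fin 4, ((w i * m i : ℕ) : ℂ) • monomial m (coeff m f) := by
        refine Finset.sum_congr rfl fun i _ => ?_
        rw [X_mul_pderiv_monomial, smul_smul]
        push_cast; ring_nf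
    _ = ((∑ i : Fin 4, w i * m i : ℕ) : ℂ) • monomial m (coeff m f) := by
        rw [← Finset.sum_smul]; push_cast; rfl
    _ = (n : ℂ) • monomial m (coeff m f) := by
        congr 2
        rw [← hw, Finsupp.weight_apply, Finsupp.sum_fintype]
        · exact Finset.sum_congr rfl fun i _ => by simp [mul_comm]
        · intro i; simp

lemma euler_hol (p : ℕ) (f : A4) (hf : IsWeightedHomogeneous wHol f p) :
    X 0 * pderiv 0 f + X 1 * pderiv 1 f = C (p : ℂ) * f := by
  have h := euler_weighted wHol p f hf
  rw [Fin.sum_univ_four] at h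
  simp only [wHol, Matrix.cons_val_zero, Matrix.cons_val_one, Matrix.head_cons,
    Matrix.cons_val_two, Matrix.tail_cons, Matrix.cons_val_three, Nat.cast_one,
    Nat.cast_zero, one_smul, zero_smul, add_zero] at h
  rw [← smul_eq_C_mul]; exact h

lemma euler_anti (q : ℕ) (f : A4) (hf : IsWeightedHomogeneous wAnti f q) :
    X 2 * pderiv 2 f + X 3 * pderiv 3 f = C (q : ℂ) * f := by
  have h := euler_weighted wAnti q f hf
  rw [Fin.sum_univ_four] at h
  simp only [wAnti, Matrix.cons_val_zero, Matrix.cons_val_one, Matrix.head_cons,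
    Matrix.cons_val_two, Matrix.tail_cons, Matrix.cons_val_three, Nat.cast_one,
    Nat.cast_zero, one_smul, zero_smul, zero_add] at h
  rw [← smul_eq_C_mul]; exact h

lemma hE_Z1 (c : ℂ) (f : A4)
    (hE : X 0 * pderiv 0 f + X 1 * pderiv 1 f = C c * f) :
    X 0 * pderiv 0 (Z1 f) + X 1 * pderiv 1 (Z1 f) = (C c - 1) * Z1 f := by
  have h0 := congrArg (pderiv 0) hE
  have h1 := congrArg (pderiv 1) hE
  simp only [map_sub, map_add, pderiv_mul, pderiv_C, pderiv_X_self,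
    pderiv_X_of_ne (show (0:Fin 4) ≠ 1 by decide),
    pderiv_X_of_ne (show (0:Fin 4) ≠ 2 by decide),
    pderiv_X_of_ne (show (0:Fin 4) ≠ 3 by decide),
    pderiv_X_of_ne (show (1:Fin 4) ≠ 0 by decide),
    pderiv_X_of_ne (show (1:Fin 4) ≠ 2 by decide),
    pderiv_X_of_ne (show (1:Fin 4) ≠ 3 by decide),
    pderiv_X_of_ne (show (2:Fin 4) ≠ 0 by decide),
    pderiv_X_of_ne (show (2:Fin 4) ≠ 1 by decide),
    pderiv_X_of_ne (show (2:Fin 4) ≠ 3 by decide),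
    pderiv_X_of_ne (show (3:Fin 4) ≠ 0 by decide),
    pderiv_X_of_ne (show (3:Fin 4) ≠ 1 by decide),
    pderiv_X_of_ne (show (3:Fin 4) ≠ 2 by decide),
    zero_mul, mul_zero, one_mul, zero_add, add_zero] at h0 h1
  unfold Z1
  simp only [map_sub, map_add, pderiv_mul, pderiv_C, pderiv_X_self,
    pderiv_X_of_ne (show (0:Fin 4) ≠ 1 by decide),
    pderiv_X_of_ne (show (0:Fin 4) ≠ 2 by decide),
    pderiv_X_of_ne (show (0:Fin 4) ≠ 3 by decide),
    pderiv_X_of_ne (show (1:Fin 4) ≠ 0 by decide),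
    pderiv_X_of_ne (show (1:Fin 4) ≠ 2 by decide),
    pderiv_X_of_ne (show (1:Fin 4) ≠ 3 by decide),
    pderiv_X_of_ne (show (2:Fin 4) ≠ 0 by decide),
    pderiv_X_of_ne (show (2:Fin 4) ≠ 1 by decide),
    pderiv_X_of_ne (show (2:Fin 4) ≠ 3 by decide),
    pderiv_X_of_ne (show (3:Fin 4) ≠ 0 by decide),
    pderiv_X_of_ne (show (3:Fin 4) ≠ 1 by decide),
    pderiv_X_of_ne (show (3:Fin 4) ≠ 2 by decide),
    zero_mul, mul_zero, one_mul, zero_add, add_zero]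
  rw [pderiv_comm' 1 0 f]
  linear_combination X 3 * h0 - X 2 * h1 + X 0 * X 2 * pderiv_comm' 1 0 f

lemma hA_Z1 (d : ℂ) (f : A4)
    (hA : X 2 * pderiv 2 f + X 3 * pderiv 3 f = C d * f) :
    X 2 * pderiv 2 (Z1 f) + X 3 * pderiv 3 (Z1 f) = (C d + 1) * Z1 f := by
  have h2 := congrArg (pderiv 0) hA
  have h3 := congrArg (pderiv 1) hA
  simp only [map_sub, map_add, pderiv_mul, pderiv_C, pderiv_X_self,
    pderiv_X_of_ne (show (0:Fin 4) ≠ 1 by decide),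
    pderiv_X_of_ne (show (0:Fin 4) ≠ 2 by decide),
    pderiv_X_of_ne (show (0:Fin 4) ≠ 3 by decide),
    pderiv_X_of_ne (show (1:Fin 4) ≠ 0 by decide),
    pderiv_X_of_ne (show (1:Fin 4) ≠ 2 by decide),
    pderiv_X_of_ne (show (1:Fin 4) ≠ 3 by decide),
    pderiv_X_of_ne (show (2:Fin 4) ≠ 0 by decide),
    pderiv_X_of_ne (show (2:Fin 4) ≠ 1 by decide),
    pderiv_X_of_ne (show (2:Fin 4) ≠ 3 by decide),
    pderiv_X_of_ne (show (3:Fin 4) ≠ 0 by decide),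
    pderiv_X_of_ne (show (3:Fin 4) ≠ 1 by decide),
    pderiv_X_of_ne (show (3:Fin 4) ≠ 2 by decide),
    zero_mul, mul_zero, one_mul, zero_add, add_zero] at h2 h3
  rw [pderiv_comm' 0 2 f, pderiv_comm' 0 3 f] at h2
  rw [pderiv_comm' 1 2 f, pderiv_comm' 1 3 f] at h3
  unfold Z1
  simp only [map_sub, map_add, pderiv_mul, pderiv_C, pderiv_X_self,
    pderiv_X_of_ne (show (0:Fin 4) ≠ 1 by decide),
    pderiv_X_of_ne (show (0:Fin 4) ≠ 2 by decide),
    pderiv_X_of_ne (show (0:Fin 4) ≠ 3 by decide),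
    pderiv_X_of_ne (show (1:Fin 4) ≠ 0 by decide),
    pderiv_X_of_ne (show (1:Fin 4) ≠ 2 by decide),
    pderiv_X_of_ne (show (1:Fin 4) ≠ 3 by decide),
    pderiv_X_of_ne (show (2:Fin 4) ≠ 0 by decide),
    pderiv_X_of_ne (show (2:Fin 4) ≠ 1 by decide),
    pderiv_X_of_ne (show (2:Fin 4) ≠ 3 by decide),
    pderiv_X_of_ne (show (3:Fin 4) ≠ 0 by decide),
    pderiv_X_of_ne (show (3:Fin 4) ≠ 1 by decide),
    pderiv_X_of_ne (show (3:Fin 4) ≠ 2 by decide),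
    zero_mul, mul_zero, one_mul, zero_add, add_zero]
  linear_combination X 3 * h2 - X 2 * h3

lemma Lap_Z1 (f : A4) (hH : Lap f = 0) : Lap (Z1 f) = 0 := by
  have hH' : pderiv 0 (pderiv 2 f) + pderiv 1 (pderiv 3 f) = 0 := hH
  have g0 := congrArg (pderiv 0) hH'
  have g1 := congrArg (pderiv 1) hH'
  simp only [map_add, map_zero] at g0 g1
  unfold Lap Z1
  simp only [map_sub, map_add, pderiv_mul, pderiv_C, pderiv_X_self,
    pderiv_X_of_ne (show (0:Fin 4) ≠ 1 by decide),
    pderiv_X_of_ne (show (0:Fin 4) ≠ 2 by decide),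
    pderiv_X_of_ne (show (0:Fin 4) ≠ 3 by decide),
    pderiv_X_of_ne (show (1:Fin 4) ≠ 0 by decide),
    pderiv_X_of_ne (show (1:Fin 4) ≠ 2 by decide),
    pderiv_X_of_ne (show (1:Fin 4) ≠ 3 by decide),
    pderiv_X_of_ne (show (2:Fin 4) ≠ 0 by decide),
    pderiv_X_of_ne (show (2:Fin 4) ≠ 1 by decide),
    pderiv_X_of_ne (show (2:Fin 4) ≠ 3 by decide),
    pderiv_X_of_ne (show (3:Fin 4) ≠ 0 by decide),
    pderiv_X_of_ne (show (3:Fin 4) ≠ 1 by decide),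
    pderiv_X_of_ne (show (3:Fin 4) ≠ 2 by decide),
    zero_mul, mul_zero, one_mul, zero_add, add_zero]
  rw [pderiv_comm' 2 0 f, pderiv_comm' 3 0 f, pderiv_comm' 2 1 f, pderiv_comm' 3 1 f,
    pderiv_comm' 1 0 (pderiv 3 f), pderiv_comm' 0 1 (pderiv 2 f),
    pderiv_comm' 1 0 f]
  linear_combination X 3 * g0 - X 2 * g1

lemma key (c d : ℂ) (f : A4)
    (hE : X 0 * pderiv 0 f + X 1 * pderiv 1 f = C c * f)
    (hA : X 2 * pderiv 2 f + X 3 * pderiv 3 f = C d * f)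
    (hH : Lap f = 0) :
    Z1c (Z1 f) = -(C c * (C d + 1)) * f := by
  have hH' : pderiv 0 (pderiv 2 f) + pderiv 1 (pderiv 3 f) = 0 := hH
  have hA0 := congrArg (pderiv 0) hA
  have hA1 := congrArg (pderiv 1) hA
  simp only [map_sub, map_add, pderiv_mul, pderiv_C, pderiv_X_self,
    pderiv_X_of_ne (show (0:Fin 4) ≠ 1 by decide),
    pderiv_X_of_ne (show (0:Fin 4) ≠ 2 by decide),
    pderiv_X_of_ne (show (0:Fin 4) ≠ 3 by decide),
    pderiv_X_of_ne (show (1:Fin 4) ≠ 0 by decide),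
    pderiv_X_of_ne (show (1:Fin 4) ≠ 2 by decide),
    pderiv_X_of_ne (show (1:Fin 4) ≠ 3 by decide),
    pderiv_X_of_ne (show (2:Fin 4) ≠ 0 by decide),
    pderiv_X_of_ne (show (2:Fin 4) ≠ 1 by decide),
    pderiv_X_of_ne (show (2:Fin 4) ≠ 3 by decide),
    pderiv_X_of_ne (show (3:Fin 4) ≠ 0 by decide),
    pderiv_X_of_ne (show (3:Fin 4) ≠ 1 by decide),
    pderiv_X_of_ne (show (3:Fin 4) ≠ 2 by decide),
    zero_mul, mul_zero, one_mul, zero_add, add_zero] at hA0 hA1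
  unfold Z1c Z1
  simp only [map_sub, map_add, pderiv_mul, pderiv_C, pderiv_X_self,
    pderiv_X_of_ne (show (0:Fin 4) ≠ 1 by decide),
    pderiv_X_of_ne (show (0:Fin 4) ≠ 2 by decide),
    pderiv_X_of_ne (show (0:Fin 4) ≠ 3 by decide),
    pderiv_X_of_ne (show (1:Fin 4) ≠ 0 by decide),
    pderiv_X_of_ne (show (1:Fin 4) ≠ 2 by decide),
    pderiv_X_of_ne (show (1:Fin 4) ≠ 3 by decide),
    pderiv_X_of_ne (show (2:Fin 4) ≠ 0 by decide),
    pderiv_X_of_ne (show (2:Fin 4) ≠ 1 by decide),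
    pderiv_X_of_ne (show (2:Fin 4) ≠ 3 by decide),
    pderiv_X_of_ne (show (3:Fin 4) ≠ 0 by decide),
    pderiv_X_of_ne (show (3:Fin 4) ≠ 1 by decide),
    pderiv_X_of_ne (show (3:Fin 4) ≠ 2 by decide),
    zero_mul, mul_zero, one_mul, zero_add, add_zero]
  rw [pderiv_comm' 2 0 f, pderiv_comm' 2 1 f, pderiv_comm' 3 0 f, pderiv_comm' 3 1 f]
  linear_combination (-(X 1)) * hA1 + (-(X 0)) * hA0
    + (X 1 * X 3 + X 0 * X 2) * hH' + (-(C d + 1)) * hE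

lemma Z1c_C_mul (a : ℂ) (h : A4) : Z1c (C a * h) = C a * Z1c h := by
  unfold Z1c
  simp only [pderiv_C_mul]
  ring

/-- for `f ∈ H_{p,q}` one has `Z₁̄² Z₁² f = p(p−1)(q+1)(q+2) f`. -/
theorem Z1c_sq_Z1_sq_eigenvalue (p q : ℕ) (f : A4)
    (hf : IsBihom p q f) (hharm : Lap f = 0) :
    Z1c (Z1c (Z1 (Z1 f))) =
      ((p : ℂ) * ((p : ℂ) - 1) * ((q : ℂ) + 1) * ((q : ℂ) + 2)) • f := by
  obtain ⟨hf1, hf2⟩ := hf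
  have hE := euler_hol p f hf1
  have hA := euler_anti q f hf2
  have h2 := key (p : ℂ) (q : ℂ) f hE hA hharm
  have hEg : X 0 * pderiv 0 (Z1 f) + X 1 * pderiv 1 (Z1 f)
      = C ((p : ℂ) - 1) * Z1 f := by
    rw [map_sub, map_one]; exact hE_Z1 _ f hE
  have hAg : X 2 * pderiv 2 (Z1 f) + X 3 * pderiv 3 (Z1 f)
      = C ((q : ℂ) + 1) * Z1 f := by
    rw [map_add, map_one]; exact hA_Z1 _ f hA
  have hHg := Lap_Z1 f hharm
  have h1 := key ((p : ℂ) - 1) ((q : ℂ) + 1) (Z1 f) hEg hAg hHg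
  have hc : (-(C ((p : ℂ) - 1) * (C ((q : ℂ) + 1) + 1)) : A4)
      = C (-(((p : ℂ) - 1) * ((q : ℂ) + 2))) := by
    simp only [map_neg, map_mul, map_sub, map_add, map_one, map_ofNat]
    ring
  rw [hc] at h1
  rw [h1, Z1c_C_mul, h2, smul_eq_C_mul]
  simp only [map_neg, map_mul, map_sub, map_add, map_one, map_ofNat]
  ring
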